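/- arXiv:2309.01573 — 5 statements merged into one kernel-verified Lean document; each statement's English description precedes it below -/
import Mathlib

section
/- Let R be a commutative Noetherian ring, M a finitely generated R-module, N a proper submodule of M, and 𝔭 a prime ideal of R. Then 𝔭 is an associated prime of M/N if and only if there exists a submodule K of M with N ⊊ K ⊆ M such that N is a 𝔭-prime submodule of K (i.e., (N :_R K) = 𝔭 and for all a ∈ R and x ∈ K, a·x ∈ N implies a ∈ 𝔭 or x ∈ N). -/
/-! Over a Noetherian ring the associated primes of `M ⧸ N` are exactly the ideals
`(N : x)` that are prime. If `(N : m)` is prime then `N` is `(N : m)`-prime in `N + Rm`;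
conversely, if `N` is `p`-prime in `K`, every `x ∈ K \ N` has `(N : x) = p`. -/

namespace Submodule

variable {R M : Type*} [CommRing R] [AddCommGroup M] [Module R M]

theorem colon_bot_singleton_mkQ (N : Submodule R M) (x : M) :
    (⊥ : Submodule R (M ⧸ N)).colon {N.mkQ x} = N.colon {x} := by
  ext a
  rw [mem_colon_singleton, mem_colon_singleton, mkQ_apply, ← Quotient.mk_smul, mem_bot,
    Quotient.mk_eq_zero]

theorem mem_associatedPrimes_quotient_iff [IsNoetherianRing R] {N : Submodule R M}
    {p : Ideal R} : p ∈ associatedPrimes R (M ⧸ N) ↔ p.IsPrime ∧ ∃ x : M, p = N.colon {x} := by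
  rw [AssociatedPrimes.mem_iff, isAssociatedPrime_iff, N.mkQ_surjective.exists]
  simp only [colon_bot_singleton_mkQ]

theorem colon_sup_span_singleton (N : Submodule R M) (m : M) :
    N.colon ↑(N ⊔ R ∙ m) = N.colon {m} := by
  rw [← span_eq N, ← span_union, colon_span, span_eq, colon_union,
    (colon_eq_top_iff_subset _).2 subset_rfl, top_inf_eq]

theorem mem_colon_singleton_or_mem_of_smul_mem {N : Submodule R M} {m : M}
    (hm : (N.colon {m}).IsPrime) {a : R} {x : M} (hx : x ∈ N ⊔ R ∙ m) (hax : a • x ∈ N) :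
    a ∈ N.colon {m} ∨ x ∈ N := by
  obtain ⟨n, hn, _, hr, rfl⟩ := mem_sup.1 hx
  obtain ⟨r, rfl⟩ := mem_span_singleton.1 hr
  have har : (a * r) • m ∈ N := by
    rw [mul_smul, ← add_sub_cancel_left (a • n) (a • r • m), ← smul_add]
    exact N.sub_mem hax (N.smul_mem a hn)
  refine (hm.mem_or_mem (mem_colon_singleton.2 har)).imp_right fun hr ↦ ?_
  exact N.add_mem hn (mem_colon_singleton.1 hr)

theorem colon_singleton_eq_of_mem_or_mem {N K : Submodule R M} {p : Ideal R}
    (hK : N.colon K = p) (hprime : ∀ (a : R), ∀ x ∈ K, a • x ∈ N → a ∈ p ∨ x ∈ N)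
    {x : M} (hxK : x ∈ K) (hxN : x ∉ N) : N.colon {x} = p := by
  refine le_antisymm (fun a ha ↦ ?_) (hK ▸ colon_mono le_rfl (Set.singleton_subset_iff.2 hxK))
  exact (hprime a x hxK (mem_colon_singleton.1 ha)).resolve_right hxN

end Submodule

open Submodule in
theorem stmt0_general {R M : Type*} [CommRing R] [IsNoetherianRing R] [AddCommGroup M]
    [Module R M] (N : Submodule R M)
    (p : Ideal R) (hp : p.IsPrime) :
    p ∈ associatedPrimes R (M ⧸ N) ↔
      ∃ K : Submodule R M, N < K ∧ Submodule.colon N K = p ∧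
        ∀ (a : R), ∀ x ∈ K, a • x ∈ N → a ∈ p ∨ x ∈ N := by
  rw [mem_associatedPrimes_quotient_iff]
  constructor
  · rintro ⟨-, m, rfl⟩
    have hm : m ∉ N := fun hm ↦
      hp.ne_top ((colon_eq_top_iff_subset _).2 (Set.singleton_subset_iff.2 hm))
    exact ⟨N ⊔ R ∙ m, lt_sup_iff_notMem.2 hm, colon_sup_span_singleton N m,
      fun a x hx hax ↦ mem_colon_singleton_or_mem_of_smul_mem hp hx hax⟩
  · rintro ⟨K, hNK, hK, hprime⟩
    obtain ⟨x, hxK, hxN⟩ := SetLike.exists_of_lt hNK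
    exact ⟨hp, x, (colon_singleton_eq_of_mem_or_mem hK hprime hxK hxN).symm⟩

theorem stmt0 {R M : Type*} [CommRing R] [IsNoetherianRing R] [AddCommGroup M]
    [Module R M] [Module.Finite R M] (N : Submodule R M) (hN : N ≠ ⊤)
    (p : Ideal R) (hp : p.IsPrime) :
    p ∈ associatedPrimes R (M ⧸ N) ↔
      ∃ K : Submodule R M, N < K ∧ Submodule.colon N K = p ∧
        ∀ (a : R), ∀ x ∈ K, a • x ∈ N → a ∈ p ∨ x ∈ N :=
  stmt0_general N p hp
end

section
/- Let R be a commutative Noetherian ring, M a finitely generated R-module, 𝔭 a prime ideal of R, and r a positive integer. Suppose 𝔭 is an associated prime of 𝔭^{r-1}M / 𝔭ʳM, and let N = { x ∈ M : (𝔭ʳM :_R x) ⊄ 𝔭 }. Then N is a proper submodule of M and Ass(M/N) = {𝔭}. -/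
/-!
Put `L = 𝔭ʳM`. For `x ∉ N` the ideal `(N :_R x)` lies in `𝔭`, while
`𝔭ʳ ⊆ (L :_R x) ⊆ (N :_R x)`; so every associated prime of `M/N`, being the radical of such an
ideal, is squeezed to `𝔭`. An element of `𝔭^{r-1}M` witnessing `𝔭 ∈ Ass(𝔭^{r-1}M/𝔭ʳM)` has
`√(L :_R x) = 𝔭`, hence `x ∉ N` and `√(N :_R x) = 𝔭`.
-/

namespace Submodule

variable {R M M' : Type*} [CommRing R] [AddCommGroup M] [Module R M]
  [AddCommGroup M'] [Module R M']

theorem bot_colon_mk (N : Submodule R M) (x : M) :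
    (⊥ : Submodule R (M ⧸ N)).colon {Submodule.Quotient.mk x} = N.colon {x} := by
  ext a
  rw [mem_colon_singleton, mem_colon_singleton, mem_bot, ← Quotient.mk_smul,
    Quotient.mk_eq_zero]

theorem associatedPrimes_quotient (N : Submodule R M) :
    associatedPrimes R (M ⧸ N) = N.associatedPrimes := by
  ext I
  refine ⟨fun ⟨hI, x, hx⟩ ↦ ?_,
    fun ⟨hI, x, hx⟩ ↦ ⟨hI, Quotient.mk x, by rw [bot_colon_mk, hx]⟩⟩
  obtain ⟨x, rfl⟩ := Quotient.mk_surjective N x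
  exact ⟨hI, x, by rw [hx, bot_colon_mk]⟩

theorem colon_comap_singleton (f : M' →ₗ[R] M) (L : Submodule R M) (x : M') :
    (L.comap f).colon {x} = L.colon {f x} := by
  ext a
  rw [mem_colon_singleton, mem_colon_singleton, mem_comap, map_smul]

theorem IsAssociatedPrime.of_comap {f : M' →ₗ[R] M} {L : Submodule R M} {I : Ideal R}
    (h : (L.comap f).IsAssociatedPrime I) : L.IsAssociatedPrime I := by
  obtain ⟨hI, x, hx⟩ := h
  exact ⟨hI, f x, by rw [hx, colon_comap_singleton]⟩

theorem colon_span_singleton_eq_top {L : Submodule R M} {x : M} (hx : x ∈ L) :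
    L.colon (span R {x}) = ⊤ := by
  rw [colon_span, colon_eq_top_iff_subset, Set.singleton_subset_iff]
  exact hx

/-- The kernel of `M → (M ⧸ L)_𝔭`. -/
def saturationAt (L : Submodule R M) (p : Ideal R) [hp : p.IsPrime] : Submodule R M where
  carrier := {x | ¬ L.colon (span R {x}) ≤ p}
  zero_mem' := by
    rw [Set.mem_ofPred_eq, colon_span_singleton_eq_top L.zero_mem, top_le_iff]
    exact hp.ne_top
  add_mem' := by
    simp only [Set.mem_ofPred_eq, SetLike.not_le_iff_exists, mem_colon_span_singleton]
    rintro x y ⟨s, hsx, hs⟩ ⟨t, hty, ht⟩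
    refine ⟨t * s, ?_, fun h ↦ (hp.mem_or_mem h).elim ht hs⟩
    rw [smul_add, mul_smul, mul_comm, mul_smul]
    exact L.add_mem (L.smul_mem t hsx) (L.smul_mem s hty)
  smul_mem' := by
    simp only [Set.mem_ofPred_eq, SetLike.not_le_iff_exists, mem_colon_span_singleton]
    rintro a x ⟨s, hsx, hs⟩
    exact ⟨s, by rw [smul_comm]; exact L.smul_mem a hsx, hs⟩

section saturationAt

variable {L : Submodule R M} {p : Ideal R} [hp : p.IsPrime]

theorem mem_saturationAt {x : M} : x ∈ L.saturationAt p ↔ ¬ L.colon (span R {x}) ≤ p :=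
  Iff.rfl

theorem le_saturationAt : L ≤ L.saturationAt p := fun _ hx h ↦
  hp.ne_top <| top_le_iff.1 <| colon_span_singleton_eq_top hx ▸ h

theorem colon_saturationAt_le {x : M} (hx : x ∉ L.saturationAt p) :
    (L.saturationAt p).colon {x} ≤ p := by
  intro a ha
  rw [mem_colon_singleton, mem_saturationAt, SetLike.not_le_iff_exists] at ha
  obtain ⟨b, hb, hbp⟩ := ha
  rw [mem_saturationAt, not_not] at hx
  rw [mem_colon_span_singleton, ← mul_smul, ← mem_colon_span_singleton] at hb
  exact (hp.mem_or_mem (hx hb)).resolve_left hbp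

theorem associatedPrimes_saturationAt {n : ℕ} (hL : p ^ n • ⊤ ≤ L)
    (hpL : p ∈ L.associatedPrimes) : (L.saturationAt p).associatedPrimes = {p} := by
  refine Set.eq_singleton_iff_unique_mem.2 ⟨?_, ?_⟩
  · obtain ⟨-, x, hx⟩ := hpL
    have hxS : x ∉ L.saturationAt p := by
      rw [mem_saturationAt, not_not, colon_span]
      exact hx ▸ Ideal.le_radical
    refine ⟨hp, x, le_antisymm ?_ (hp.radical_le_iff.2 (colon_saturationAt_le hxS))⟩
    exact hx.trans_le (Ideal.radical_mono (colon_mono le_saturationAt le_rfl))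
  · rintro q ⟨hq, m, rfl⟩
    have hm : m ∉ L.saturationAt p := fun hm ↦ hq.ne_top <| by
      rw [(colon_eq_top_iff_subset _).2 (Set.singleton_subset_iff.2 hm), Ideal.radical_top]
    refine le_antisymm (hp.radical_le_iff.2 (colon_saturationAt_le hm)) ?_
    have hpow : p ^ n ≤ (L.saturationAt p).colon {m} :=
      calc p ^ n ≤ L.colon {m} := fun _ ha ↦
            mem_colon_singleton.2 (hL (smul_mem_smul ha mem_top))
        _ ≤ (L.saturationAt p).colon {m} := colon_mono le_saturationAt le_rfl
    exact hq.le_of_pow_le (hpow.trans Ideal.le_radical)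

end saturationAt

end Submodule

open Submodule

theorem stmt5_general {R M : Type*} [CommRing R] [AddCommGroup M]
    [Module R M] (p : Ideal R) (hp : p.IsPrime)
    (r : ℕ)
    (hass : p ∈ associatedPrimes R
      (↥(p ^ (r - 1) • ⊤ : Submodule R M) ⧸
        Submodule.comap (p ^ (r - 1) • ⊤ : Submodule R M).subtype
          (p ^ r • ⊤ : Submodule R M)))
    (N : Submodule R M)
    (hNdef : (N : Set M) =
      {x : M | ¬ Submodule.colon (p ^ r • ⊤ : Submodule R M)
        (Submodule.span R {x}) ≤ p}) :
    N ≠ ⊤ ∧ associatedPrimes R (M ⧸ N) = {p} := by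
  have hN : N = (p ^ r • ⊤ : Submodule R M).saturationAt p := SetLike.coe_injective hNdef
  have hL : p ∈ (p ^ r • ⊤ : Submodule R M).associatedPrimes := by
    rw [associatedPrimes_quotient] at hass
    exact hass.of_comap
  have hAss : associatedPrimes R (M ⧸ N) = {p} := by
    rw [associatedPrimes_quotient, hN, associatedPrimes_saturationAt le_rfl hL]
  refine ⟨?_, hAss⟩
  rintro rfl
  rw [associatedPrimes.eq_empty_of_subsingleton] at hAss
  exact Set.singleton_ne_empty p hAss.symm

theorem stmt5 {R M : Type*} [CommRing R] [IsNoetherianRing R] [AddCommGroup M]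
    [Module R M] [Module.Finite R M] (p : Ideal R) (hp : p.IsPrime)
    (r : ℕ) (hr : 0 < r)
    (hass : p ∈ associatedPrimes R
      (↥(p ^ (r - 1) • ⊤ : Submodule R M) ⧸
        Submodule.comap (p ^ (r - 1) • ⊤ : Submodule R M).subtype
          (p ^ r • ⊤ : Submodule R M)))
    (N : Submodule R M)
    (hNdef : (N : Set M) =
      {x : M | ¬ Submodule.colon (p ^ r • ⊤ : Submodule R M)
        (Submodule.span R {x}) ≤ p}) :
    N ≠ ⊤ ∧ associatedPrimes R (M ⧸ N) = {p} :=
  stmt5_general p hp r hass N hNdef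
end

section
/- Let R = k[x,y,z]/(xy − z², x² − yz) for a field k, and let 𝔭 = (x̄, z̄) where bars denote images in R. Then 𝔭 is a prime ideal of R and the ideal quotient (𝔭² : 𝔭) equals the maximal ideal (x̄, ȳ, z̄). -/
/-!
Let `P = (x, z)` and `M = (x, y, z)` in `k[x, y, z]`; both generators of `I` lie in `P·M`.
Ideals spanned by variables are prime (kernels of substitutions into a domain) and `M` is
maximal, so their images `𝔭` and `𝔪` in `R = k[x, y, z]/I` are prime and maximal.
The relations `ȳx̄ = z̄²` and `ȳz̄ = x̄²` give `𝔪 ⊆ (𝔭² : 𝔭)`. Conversely the colon ideal is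
proper, because `x̄ ∉ 𝔭²`: the preimage of `𝔭²` is `P² + I ⊆ M²`, which contains no
linear form. By maximality of `𝔪` the two ideals coincide.
-/

open MvPolynomial Ideal

namespace MvPolynomial

variable {σ R : Type*} [CommRing R]

lemma ker_constantCoeff :
    RingHom.ker (constantCoeff : MvPolynomial σ R →+* R) = idealOfVars σ R := by
  ext f
  rw [RingHom.mem_ker, idealOfVars, ← Set.image_univ, mem_ideal_span_X_image]
  simp only [Set.mem_univ, true_and]
  refine ⟨fun h m hm => (Finsupp.ne_iff (g := 0)).1 ?_, fun h => by_contra fun h0 => ?_⟩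
  · rintro rfl
    exact mem_support_iff.1 hm h
  · obtain ⟨i, hi⟩ := h 0 (mem_support_iff.2 h0)
    exact hi rfl

lemma isMaximal_idealOfVars {k : Type*} [Field k] : (idealOfVars σ k).IsMaximal :=
  ker_constantCoeff (σ := σ) (R := k) ▸
    RingHom.ker_isMaximal_of_surjective _ fun c => ⟨C c, constantCoeff_C σ c⟩

lemma sub_bind₁_ite_mem_span_X_image (s : Set σ) [DecidablePred (· ∈ s)]
    (f : MvPolynomial σ R) :
    f - bind₁ (fun i => if i ∈ s then 0 else X i) f ∈ span (X '' s) := by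
  induction f using MvPolynomial.induction_on with
  | C a => simp
  | add f g hf hg => simpa only [map_add, add_sub_add_comm] using add_mem hf hg
  | mul_X f i hf =>
    set φ := bind₁ (R := R) fun i => if i ∈ s then 0 else (X i : MvPolynomial σ R)
    have hXi : X i - φ (X i) ∈ span (X '' s) := by
      by_cases hi : i ∈ s
      · simpa [φ, hi] using subset_span (Set.mem_image_of_mem X hi)
      · simp [φ, hi]
    have : f * X i - φ (f * X i) = (f - φ f) * X i + φ f * (X i - φ (X i)) := by
      rw [map_mul]; ring
    rw [this]
    exact add_mem (mul_mem_right _ _ hf) (mul_mem_left _ _ hXi)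

lemma isPrime_span_X_image [IsDomain R] (s : Set σ) :
    (span (X '' s : Set (MvPolynomial σ R))).IsPrime := by
  classical
  let φ := bind₁ (R := R) fun i => if i ∈ s then 0 else (X i : MvPolynomial σ R)
  suffices RingHom.ker φ = span (X '' s) from this ▸ RingHom.ker_isPrime φ
  refine le_antisymm (fun f hf => ?_) (span_le.2 ?_)
  · have := sub_bind₁_ite_mem_span_X_image s f
    rwa [show φ f = 0 from hf, sub_zero] at this
  · rintro _ ⟨i, hi, rfl⟩
    simp [φ, hi]

lemma mk_X_notMem_map_pow_two [Nontrivial R] {I J : Ideal (MvPolynomial σ R)}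
    (hJ : J ≤ idealOfVars σ R) (hI : I ≤ idealOfVars σ R ^ 2) (i : σ) :
    Ideal.Quotient.mk I (X i) ∉ J.map (Ideal.Quotient.mk I) ^ 2 := by
  rw [← Ideal.map_pow, ← mem_comap, comap_map_of_surjective' _ Quotient.mk_surjective, mk_ker]
  intro h
  have := sup_le (pow_le_pow_left' hJ 2) hI h
  rw [X, monomial_mem_pow_idealOfVars_iff _ _ one_ne_zero] at this
  simp at this

end MvPolynomial

section

variable {k : Type*} [Field k]

lemma idealOfVars_fin_three : idealOfVars (Fin 3) k = span {X 0, X 1, X 2} := by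
  rw [idealOfVars]
  congr 1
  ext f
  simp [Fin.exists_fin_succ, eq_comm]

lemma span_relations_le_mul_idealOfVars :
    span {X 0 * X 1 - X 2 ^ 2, X 0 ^ 2 - X 1 * X 2} ≤
      span (X '' {0, 2}) * idealOfVars (Fin 3) k := by
  have hX : ∀ i, (X i : MvPolynomial (Fin 3) k) ∈ idealOfVars (Fin 3) k :=
    fun i => subset_span ⟨i, rfl⟩
  have hX0 : (X 0 : MvPolynomial (Fin 3) k) ∈ span (X '' {0, 2}) :=
    subset_span ⟨0, by simp, rfl⟩
  have hX2 : (X 2 : MvPolynomial (Fin 3) k) ∈ span (X '' {0, 2}) :=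
    subset_span ⟨2, by simp, rfl⟩
  rw [span_le, Set.pair_subset_iff, SetLike.mem_coe, SetLike.mem_coe]
  constructor
  · convert sub_mem (mul_mem_mul hX0 (hX 1)) (mul_mem_mul hX2 (hX 2)) using 1
    ring
  · convert sub_mem (mul_mem_mul hX0 (hX 0)) (mul_mem_mul hX2 (hX 1)) using 1
    ring

lemma span_mk_X_le_colon {I : Ideal (MvPolynomial (Fin 3) k)}
    (hI : span {X 0 * X 1 - X 2 ^ 2, X 0 ^ 2 - X 1 * X 2} ≤ I) :
    span {Ideal.Quotient.mk I (X 0), Ideal.Quotient.mk I (X 1), Ideal.Quotient.mk I (X 2)} ≤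
      Submodule.colon (span {Ideal.Quotient.mk I (X 0), Ideal.Quotient.mk I (X 2)} ^ 2)
        (span {Ideal.Quotient.mk I (X 0), Ideal.Quotient.mk I (X 2)}) := by
  set p := span {Ideal.Quotient.mk I (X 0), Ideal.Quotient.mk I (X 2)}
  have hx : Ideal.Quotient.mk I (X 0) ∈ p := subset_span (by simp)
  have hz : Ideal.Quotient.mk I (X 2) ∈ p := subset_span (by simp)
  have hyx : Ideal.Quotient.mk I (X 1) * Ideal.Quotient.mk I (X 0) =
      Ideal.Quotient.mk I (X 2) * Ideal.Quotient.mk I (X 2) := by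
    rw [← map_mul, ← map_mul, Ideal.Quotient.eq]
    exact hI (subset_span (Or.inl (by ring)))
  have hyz : Ideal.Quotient.mk I (X 1) * Ideal.Quotient.mk I (X 2) =
      Ideal.Quotient.mk I (X 0) * Ideal.Quotient.mk I (X 0) := by
    rw [← map_mul, ← map_mul, Ideal.Quotient.eq, ← neg_mem_iff]
    exact hI (subset_span (Or.inr (Set.mem_singleton_iff.2 (by ring))))
  rw [colon_span, span_le]
  rintro _ (rfl | rfl | rfl) <;> rw [SetLike.mem_coe, Submodule.mem_colon] <;>
    rintro _ (rfl | rfl) <;> rw [smul_eq_mul, pow_two]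
  exacts [mul_mem_mul hx hx, mul_mem_mul hx hz, hyx ▸ mul_mem_mul hz hz,
    hyz ▸ mul_mem_mul hx hx, mul_mem_mul hz hx, mul_mem_mul hz hz]

end

set_option synthInstance.maxHeartbeats 1000000 in
open MvPolynomial in
theorem stmt6 (k : Type*) [Field k]
    (I : Ideal (MvPolynomial (Fin 3) k))
    (hI : I = Ideal.span {X 0 * X 1 - X 2 ^ 2, X 0 ^ 2 - X 1 * X 2})
    (p : Ideal (MvPolynomial (Fin 3) k ⧸ I))
    (hpdef : p = Ideal.span
      {Ideal.Quotient.mk I (X 0), Ideal.Quotient.mk I (X 2)}) :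
    p.IsPrime ∧
    (Ideal.span {Ideal.Quotient.mk I (X 0), Ideal.Quotient.mk I (X 1),
      Ideal.Quotient.mk I (X 2)}).IsMaximal ∧
    Submodule.colon (p ^ 2) p =
      Ideal.span {Ideal.Quotient.mk I (X 0), Ideal.Quotient.mk I (X 1),
        Ideal.Quotient.mk I (X 2)} := by
  set P : Ideal (MvPolynomial (Fin 3) k) := span (X '' {0, 2})
  set M := idealOfVars (Fin 3) k
  have hP : p = P.map (Ideal.Quotient.mk I) := by
    rw [hpdef, map_span, Set.image_image, Set.image_pair]
  have hM : span {Ideal.Quotient.mk I (X 0), Ideal.Quotient.mk I (X 1),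
      Ideal.Quotient.mk I (X 2)} = M.map (Ideal.Quotient.mk I) := by
    simp only [M, idealOfVars_fin_three, map_span, Set.image_insert_eq, Set.image_singleton]
  have hIPM : I ≤ P * M := hI ▸ span_relations_le_mul_idealOfVars
  have hPM : P ≤ M := span_mono (Set.image_subset_range _ _)
  have hker : RingHom.ker (Ideal.Quotient.mk I) ≤ P := mk_ker.trans_le (hIPM.trans mul_le_left)
  have hprime : p.IsPrime :=
    hP ▸ map_isPrime_of_surjective (H := isPrime_span_X_image _) Quotient.mk_surjective hker
  have hmax : (span {Ideal.Quotient.mk I (X 0), Ideal.Quotient.mk I (X 1),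
      Ideal.Quotient.mk I (X 2)}).IsMaximal :=
    hM ▸ isMaximal_idealOfVars.map_of_surjective_of_ker_le Quotient.mk_surjective (hker.trans hPM)
  have hcolon : Submodule.colon (p ^ 2) p ≠ ⊤ := by
    rw [Ne, Submodule.colon_eq_top_iff_subset]
    intro hpp
    have hx : Ideal.Quotient.mk I (X 0) ∈ p := hpdef ▸ subset_span (by simp)
    exact mk_X_notMem_map_pow_two hPM (hIPM.trans (pow_two M ▸ mul_mono_left hPM)) 0
      (hP ▸ hpp hx)
  exact ⟨hprime, hmax,
    (hmax.eq_of_le hcolon (hpdef ▸ span_mk_X_le_colon (hI ▸ le_rfl))).symm⟩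
end

section
/- Let R = k[x,y,z]/(xy−z², x²−yz) and 𝔭 = (x̄, z̄). Then there is no ideal 𝔞 of R admitting a chain 𝔞 ⊊ 𝔞₁ ⊊ R in which 𝔞 is a 𝔭-prime submodule of 𝔞₁ and 𝔞₁ is a 𝔭-prime submodule of R, with both extensions maximal with respect to inclusion among such 𝔭-prime extensions inside R. -/
/-- `b` is a `p`-prime submodule of the ideal `c` (as extension of ideals). -/
def IsPPrimeExt {R : Type*} [CommRing R] (p b c : Ideal R) : Prop :=
  b < c ∧ Submodule.colon b c = p ∧
    ∀ a x : R, x ∈ c → a * x ∈ b → a ∈ p ∨ x ∈ b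

set_option synthInstance.maxHeartbeats 1000000 in
set_option maxHeartbeats 1000000 in
open MvPolynomial in
theorem stmt7 (k : Type*) [Field k]
    (I : Ideal (MvPolynomial (Fin 3) k))
    (hI : I = Ideal.span {X 0 * X 1 - X 2 ^ 2, X 0 ^ 2 - X 1 * X 2})
    (p : Ideal (MvPolynomial (Fin 3) k ⧸ I))
    (hpdef : p = Ideal.span
      {Ideal.Quotient.mk I (X 0), Ideal.Quotient.mk I (X 2)}) :
    ¬ ∃ a a1 : Ideal (MvPolynomial (Fin 3) k ⧸ I),
        IsPPrimeExt p a a1 ∧ IsPPrimeExt p a1 ⊤ ∧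
        (∀ c, IsPPrimeExt p a c → ¬ a1 < c) ∧
        (∀ c, IsPPrimeExt p a1 c → ¬ (⊤ : Ideal (MvPolynomial (Fin 3) k ⧸ I)) < c) := by
  rintro ⟨a, a1, ⟨haa1, hcol, hpr⟩, ⟨-, hcol1, -⟩, -, -⟩
  set q := Ideal.Quotient.mk I with hq
  -- a1 = p since colon a1 ⊤ = a1
  have ha1 : a1 = p := by
    rw [← hcol1]
    ext r
    rw [Submodule.mem_colon]
    constructor
    · intro hr x _
      simpa using Ideal.mul_mem_right x _ hr
    · intro hr
      simpa using hr 1 trivial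
  rw [ha1] at haa1 hcol hpr
  -- generators of p
  have hx0p : q (X 0) ∈ p := hpdef ▸ Ideal.subset_span (by simp)
  have hx2p : q (X 2) ∈ p := hpdef ▸ Ideal.subset_span (by simp)
  -- p * p ⊆ a
  have hsq : ∀ r ∈ p, ∀ x ∈ p, r * x ∈ a := by
    intro r hr x hx
    have : r ∈ Submodule.colon a p := by rw [hcol]; exact hr
    exact Submodule.mem_colon.mp this x hx
  -- relations in the quotient
  have hrel1 : q (X 1) * q (X 0) = q (X 2) * q (X 2) := by
    have : q (X 0 * X 1 - X 2 ^ 2) = 0 :=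
      Ideal.Quotient.eq_zero_iff_mem.mpr (hI ▸ Ideal.subset_span (by simp))
    rw [map_sub, sub_eq_zero] at this
    rw [← map_mul, ← map_mul, mul_comm (X 1), this]
    ring_nf
  have hrel2 : q (X 1) * q (X 2) = q (X 0) * q (X 0) := by
    have : q (X 0 ^ 2 - X 1 * X 2) = 0 :=
      Ideal.Quotient.eq_zero_iff_mem.mpr (hI ▸ Ideal.subset_span (by simp))
    rw [map_sub, sub_eq_zero] at this
    rw [← map_mul, ← map_mul, ← this]
    ring_nf
  -- y ∉ p
  have hy : q (X 1) ∉ p := by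
    intro hy
    have hpmap : p = Ideal.map q (Ideal.span {X 0, X 2}) := by
      rw [Ideal.map_span, Set.image_pair, hpdef]
    rw [hpmap, hq, Ideal.mem_quotient_iff_mem_sup] at hy
    have hIle : I ≤ Ideal.span ({X 0, X 2} : Set (MvPolynomial (Fin 3) k)) := by
      rw [hI, Ideal.span_le]
      rintro f (rfl | rfl)
      · exact sub_mem (Ideal.mul_mem_right _ _ (Ideal.subset_span (by simp)))
          (by rw [pow_two]; exact Ideal.mul_mem_right _ _ (Ideal.subset_span (by simp)))
      · exact sub_mem (by rw [pow_two]; exact Ideal.mul_mem_right _ _ (Ideal.subset_span (by simp)))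
          (Ideal.mul_mem_left _ _ (Ideal.subset_span (by simp)))
    rw [sup_eq_left.mpr hIle] at hy
    -- evaluate at (0, 1, 0)
    let φ : MvPolynomial (Fin 3) k →ₐ[k] k := aeval (fun i => if i = 1 then (1:k) else 0)
    have hker : Ideal.span ({X 0, X 2} : Set (MvPolynomial (Fin 3) k)) ≤
        RingHom.ker (φ : MvPolynomial (Fin 3) k →+* k) := by
      rw [Ideal.span_le]
      rintro f (rfl | rfl) <;> simp [RingHom.mem_ker, φ]
    have := hker hy
    simp [RingHom.mem_ker, φ] at this
  -- conclude x, z ∈ a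
  have hx0a : q (X 0) ∈ a := by
    rcases hpr (q (X 1)) (q (X 0)) hx0p
      (by rw [hrel1]; exact hsq _ hx2p _ hx2p) with h | h
    · exact absurd h hy
    · exact h
  have hx2a : q (X 2) ∈ a := by
    rcases hpr (q (X 1)) (q (X 2)) hx2p
      (by rw [hrel2]; exact hsq _ hx0p _ hx0p) with h | h
    · exact absurd h hy
    · exact h
  exact haa1.not_ge (by rw [hpdef, Ideal.span_le]; rintro f (rfl | rfl) <;> assumption)
end

section
/- Let R be a commutative Noetherian ring, M a finitely generated R-module, 𝔭 a prime ideal, and N ⊊ K submodules of M such that N is a 𝔭-prime submodule of K and K is maximal among submodules of M with this property. If L is any submodule of M with N ∩ L ≠ K ∩ L, then N ∩ L is a 𝔭-prime submodule of K ∩ L. -/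
/-!
Intersecting with `L` keeps the prime condition, since `a • x ∈ N ⊓ L` with `x ∈ K ⊓ L` already
gives `a • x ∈ N`. The colon ideal can only grow, so it contains `𝔭`; conversely, any
`x ∈ K ⊓ L` outside `N` is sent into `N` by each element of the colon ideal, which by the
prime condition must then lie in `𝔭`.
-/

namespace Submodule

variable {R M : Type*} [CommRing R] [AddCommGroup M] [Module R M]

def IsPrimeSubmoduleOf (p : Ideal R) (N K : Submodule R M) : Prop :=
  N < K ∧ N.colon K = p ∧ ∀ (a : R), ∀ x ∈ K, a • x ∈ N → a ∈ p ∨ x ∈ N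

variable {p : Ideal R} {N K : Submodule R M}

theorem prime_condition_inf (hprime : ∀ (a : R), ∀ x ∈ K, a • x ∈ N → a ∈ p ∨ x ∈ N)
    (L : Submodule R M) (a : R) (x : M) (hx : x ∈ K ⊓ L) (hax : a • x ∈ N ⊓ L) :
    a ∈ p ∨ x ∈ N ⊓ L :=
  (hprime a x hx.1 hax.1).imp_right fun hxN => ⟨hxN, hx.2⟩

theorem colon_le_of_prime_condition (hprime : ∀ (a : R), ∀ x ∈ K, a • x ∈ N → a ∈ p ∨ x ∈ N)
    (hKN : ¬ K ≤ N) : N.colon K ≤ p := by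
  obtain ⟨x, hxK, hxN⟩ := SetLike.not_le_iff_exists.mp hKN
  intro a ha
  exact (hprime a x hxK (mem_colon.mp ha x hxK)).resolve_right hxN

theorem colon_le_colon_inf (L : Submodule R M) : N.colon K ≤ (N ⊓ L).colon (K ⊓ L) := by
  rw [colon_inf_eq_left_of_subset (S := (K : Set M) ⊓ L) inf_le_right]
  exact colon_mono le_rfl inf_le_left

theorem IsPrimeSubmoduleOf.inf (h : IsPrimeSubmoduleOf p N K) {L : Submodule R M}
    (hL : N ⊓ L ≠ K ⊓ L) : IsPrimeSubmoduleOf p (N ⊓ L) (K ⊓ L) := by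
  obtain ⟨hNK, hcolon, hprime⟩ := h
  have hlt : N ⊓ L < K ⊓ L := lt_of_le_of_ne (inf_le_inf_right L hNK.le) hL
  have hprime_inf := prime_condition_inf hprime L
  refine ⟨hlt, le_antisymm ?_ (hcolon ▸ colon_le_colon_inf L), hprime_inf⟩
  exact colon_le_of_prime_condition hprime_inf (not_le_of_gt hlt)

end Submodule

theorem stmt9_general {R M : Type*} [CommRing R] [AddCommGroup M]
    [Module R M] (p : Ideal R)
    (N K : Submodule R M) (hNK : N < K)
    (hcolon : Submodule.colon N K = p)
    (hprime : ∀ (a : R), ∀ x ∈ K, a • x ∈ N → a ∈ p ∨ x ∈ N)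
    (L : Submodule R M) (hL : N ⊓ L ≠ K ⊓ L) :
    N ⊓ L < K ⊓ L ∧ Submodule.colon (N ⊓ L) (K ⊓ L) = p ∧
      ∀ (a : R), ∀ x ∈ K ⊓ L, a • x ∈ N ⊓ L → a ∈ p ∨ x ∈ N ⊓ L :=
  Submodule.IsPrimeSubmoduleOf.inf ⟨hNK, hcolon, hprime⟩ hL

theorem stmt9 {R M : Type*} [CommRing R] [IsNoetherianRing R] [AddCommGroup M]
    [Module R M] [Module.Finite R M] (p : Ideal R) (hp : p.IsPrime)
    (N K : Submodule R M) (hNK : N < K)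
    (hcolon : Submodule.colon N K = p)
    (hprime : ∀ (a : R), ∀ x ∈ K, a • x ∈ N → a ∈ p ∨ x ∈ N)
    (hmax : ∀ K' : Submodule R M, K < K' →
      ¬ (Submodule.colon N K' = p ∧
        ∀ (a : R), ∀ x ∈ K', a • x ∈ N → a ∈ p ∨ x ∈ N))
    (L : Submodule R M) (hL : N ⊓ L ≠ K ⊓ L) :
    N ⊓ L < K ⊓ L ∧ Submodule.colon (N ⊓ L) (K ⊓ L) = p ∧
      ∀ (a : R), ∀ x ∈ K ⊓ L, a • x ∈ N ⊓ L → a ∈ p ∨ x ∈ N ⊓ L :=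
  stmt9_general p N K hNK hcolon hprime L hL
end
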